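/- Define Φ : ℝ⁴ → ℝ⁴ by Φ(q, r, qₓ, rₓ) = ((1/2)(q - r), -(1/4)qₓ - (1/4)rₓ - (1/2)qr, (1/4)(qₓ - rₓ) + (1/4)(q² - r²), -(1/2)(q + r)) and Ψ : ℝ⁴ → ℝ⁴ by Ψ(q₁, q₂, p₁, p₂) = (q₁ - p₂, -(q₁ + p₂), 2p₁ + 2q₁p₂ - p₂² + q₁² - 2q₂, -2p₁ - 2q₁p₂ - p₂² + q₁² - 2q₂). Then Φ ∘ Ψ and Ψ ∘ Φ are both the identity map on ℝ⁴. -/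
import Mathlib


/-- The transformation (n = 2) from jet coordinates `(q, r, qₓ, rₓ)` to Viète
coordinates `(q₁, q₂, p₁, p₂)`. -/
noncomputable def Phi : ℝ × ℝ × ℝ × ℝ → ℝ × ℝ × ℝ × ℝ := fun ⟨q, r, qx, rx⟩ =>
  (1 / 2 * (q - r),
   -(1 / 4) * qx - 1 / 4 * rx - 1 / 2 * q * r,
   1 / 4 * (qx - rx) + 1 / 4 * (q ^ 2 - r ^ 2),
   -(1 / 2) * (q + r))

/-- The inverse transformation from Viète coordinates `(q₁, q₂, p₁, p₂)` back
to jet coordinates `(q, r, qₓ, rₓ)`. -/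
noncomputable def Psi : ℝ × ℝ × ℝ × ℝ → ℝ × ℝ × ℝ × ℝ := fun ⟨q₁, q₂, p₁, p₂⟩ =>
  (q₁ - p₂,
   -(q₁ + p₂),
   2 * p₁ + 2 * q₁ * p₂ - p₂ ^ 2 + q₁ ^ 2 - 2 * q₂,
   -2 * p₁ - 2 * q₁ * p₂ - p₂ ^ 2 + q₁ ^ 2 - 2 * q₂)

/-- `Phi` and `Psi` are mutually inverse bijections of `ℝ⁴`. -/
theorem phi_psi_inverse : Phi ∘ Psi = id ∧ Psi ∘ Phi = id := by
  constructor <;> funext x <;> obtain ⟨a, b, c, d⟩ := x <;>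
    simp only [Phi, Psi, Function.comp_apply, id_eq, Prod.mk.injEq] <;>
    refine ⟨by ring, by ring, by ring, by ring⟩
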